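/- For m ≥ 1, the determinant of the 2m×2m confluent Vandermonde-type matrix A with top block [Xᵢ^{j−1}] and bottom block [j·Xᵢ^{j−1}] (1 ≤ i ≤ m, 1 ≤ j ≤ 2m), viewed as a polynomial in ℤ[X₁, …, X_m], is divisible by ∏_{i=1}^m Xᵢ. -/
import Mathlib

open MvPolynomial

/-- Substituting `X k ↦ 0` detects divisibility by `X k`. -/
lemma X_dvd_iff_aeval_eq_zero {m : ℕ} (k : Fin m) (p : MvPolynomial (Fin m) ℤ) :
    (X k : MvPolynomial (Fin m) ℤ) ∣ p ↔
      (aeval (fun j : Fin m => if j = k then 0 else X j) :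
        MvPolynomial (Fin m) ℤ →ₐ[ℤ] MvPolynomial (Fin m) ℤ) p = 0 := by
  set φ : MvPolynomial (Fin m) ℤ →ₐ[ℤ] MvPolynomial (Fin m) ℤ :=
    aeval (fun j : Fin m => if j = k then 0 else X j) with hφ
  have hXk : φ (X k) = 0 := by simp [hφ]
  constructor
  · rintro ⟨q, rfl⟩
    rw [map_mul, hXk, zero_mul]
  · intro h
    have key : ∀ q : MvPolynomial (Fin m) ℤ, (X k : MvPolynomial (Fin m) ℤ) ∣ q - φ q := by
      intro q
      induction q using MvPolynomial.induction_on with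
      | C a => simp [hφ]
      | add p q hp hq =>
          have := dvd_add hp hq
          rw [map_add]
          convert this using 1
          ring
      | mul_X p j hp =>
          rw [map_mul]
          by_cases hj : j = k
          · subst hj
            rw [hXk, mul_zero, sub_zero]
            exact dvd_mul_left _ _
          · have : φ (X j) = X j := by simp [hφ, hj]
            rw [this]
            have : p * X j - φ p * X j = (p - φ p) * X j := by ring
            rw [this]
            exact hp.mul_right _
    have := key p
    rwa [h, sub_zero] at this

lemma prime_X_int {m : ℕ} (k : Fin m) : Prime (X k : MvPolynomial (Fin m) ℤ) := by
  refine ⟨?_, ?_, ?_⟩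
  · exact MvPolynomial.X_ne_zero k
  · intro hu
    have h1 : (X k : MvPolynomial (Fin m) ℤ) ∣ 1 := hu.dvd
    rw [X_dvd_iff_aeval_eq_zero] at h1
    simp at h1
  · intro a b hab
    rw [X_dvd_iff_aeval_eq_zero] at hab ⊢
    rw [X_dvd_iff_aeval_eq_zero]
    rw [map_mul] at hab
    exact mul_eq_zero.mp hab

lemma prod_X_dvd_of_forall_dvd {m : ℕ} (s : Finset (Fin m)) (p : MvPolynomial (Fin m) ℤ)
    (h : ∀ i ∈ s, (X i : MvPolynomial (Fin m) ℤ) ∣ p) :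
    (∏ i ∈ s, (X i : MvPolynomial (Fin m) ℤ)) ∣ p := by
  classical
  induction s using Finset.induction generalizing p with
  | empty => simp
  | @insert a s ha ih =>
      rw [Finset.prod_insert ha]
      obtain ⟨q, rfl⟩ := h a (Finset.mem_insert_self a s)
      refine mul_dvd_mul_left _ (ih q fun i hi => ?_)
      have hd : (X i : MvPolynomial (Fin m) ℤ) ∣ X a * q :=
        h i (Finset.mem_insert_of_mem hi)
      rcases (prime_X_int i).dvd_or_dvd hd with h1 | h2
      · rw [MvPolynomial.X_dvd_X] at h1
        exact absurd h1.symm (by rintro rfl; exact ha hi)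
      · exact h2

theorem det_confluent_vandermonde_dvd_prod_X (m : ℕ) (hm : 1 ≤ m) :
    (∏ i : Fin m, (MvPolynomial.X i : MvPolynomial (Fin m) ℤ)) ∣
      Matrix.det (Matrix.of fun i j : Fin (2 * m) =>
        if h : (i : ℕ) < m then
          (MvPolynomial.X (⟨i, h⟩ : Fin m) : MvPolynomial (Fin m) ℤ) ^ (j : ℕ)
        else (((j : ℕ) + 1 : ℕ) : MvPolynomial (Fin m) ℤ) *
          MvPolynomial.X (⟨(i : ℕ) - m, by have := i.isLt; omega⟩ : Fin m) ^ (j : ℕ)) := by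
  apply prod_X_dvd_of_forall_dvd
  intro k _
  rw [X_dvd_iff_aeval_eq_zero]
  set φ : MvPolynomial (Fin m) ℤ →ₐ[ℤ] MvPolynomial (Fin m) ℤ :=
    aeval (fun j : Fin m => if j = k then 0 else X j) with hφ
  rw [AlgHom.map_det]
  have hk1 : (k : ℕ) < 2 * m := by have := k.isLt; omega
  have hk2 : m + (k : ℕ) < 2 * m := by have := k.isLt; omega
  apply Matrix.det_zero_of_row_eq (i := ⟨k, hk1⟩) (j := ⟨m + k, hk2⟩)
  · intro h
    have := congrArg Fin.val h
    simp only [Fin.val_mk] at this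
    omega
  · funext j
    have hkm : (k : ℕ) < m := k.isLt
    have hnk : ¬ (m + (k : ℕ) < m) := by omega
    simp only [AlgHom.mapMatrix_apply, Matrix.map_apply, Matrix.of_apply]
    rw [dif_pos hkm, dif_neg hnk]
    have e1 : (⟨(k : ℕ), hkm⟩ : Fin m) = k := by ext; rfl
    have e2 : (⟨m + (k : ℕ) - m, by omega⟩ : Fin m) = k := by ext; simp
    rw [e1, e2]
    have hx : φ (X k) = 0 := by simp [hφ]
    rw [map_pow, map_mul, map_pow, hx]
    rcases Nat.eq_zero_or_pos (j : ℕ) with hj | hj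
    · rw [hj]; simp
    · rw [zero_pow (by omega), mul_zero]
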